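/- arXiv:1803.11448 — 2 statements merged into one kernel-verified Lean document; each statement's English description precedes it below -/
import Mathlib

section
/- Let (X̃, τ, A) be a soft e-compact soft e-Hausdorff space such that pointwise intersections of members of τ lie in S(X̃). Then (X̃, τ, A) is soft e-regular: for every soft e-closed set F and every soft element y with y(α) ∉ F(α) for all α ∈ A, there exist G, H ∈ τ with F ⊆̃ G, y ∈̃ H, and the elementary intersection of G and H equal to the null soft set. -/
/-! The soft analogue of "compact Hausdorff implies regular". The elementary complement of `F`
and the open sets having an open neighbourhood of `y` disjoint from them cover `X̃`. A finite
subcover gives `G`, the elementary union of its members other than `eCompl F`, and `H`, the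
elementary intersection of the corresponding neighbourhoods of `y`. -/

namespace SoftE

/-- A soft set over `X` with parameter set `A`. -/
abbrev SoftSet (X A : Type*) := A → Set X

variable {X A : Type*}

/-- A soft element `x : A → X` belongs to a soft set `F`. -/
def smem (x : A → X) (F : SoftSet X A) : Prop := ∀ α, x α ∈ F α

/-- The soft set generated by a collection of soft elements. -/
def SS (B : Set (A → X)) : SoftSet X A := fun α => {a | ∃ x ∈ B, x α = a}

/-- The null soft set. -/
def nullSoft (X A : Type*) : SoftSet X A := fun _ => ∅

/-- The absolute soft set. -/
def absSoft (X A : Type*) : SoftSet X A := fun _ => Set.univ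

/-- Membership in `S(X̃)`: empty at every parameter, or nonempty at every parameter. -/
def InS (F : SoftSet X A) : Prop := (∀ α, F α = ∅) ∨ (∀ α, F α ≠ ∅)

/-- Soft subset: pointwise inclusion. -/
def softSubset (F G : SoftSet X A) : Prop := ∀ α, F α ⊆ G α

/-- Elementary union of a set of soft sets. -/
def eUnionSet (s : Set (SoftSet X A)) : SoftSet X A := SS {x | ∃ F ∈ s, smem x F}

/-- Elementary union of an indexed family of soft sets. -/
def eUnionFam {ι : Type*} (F : ι → SoftSet X A) : SoftSet X A := SS {x | ∃ i, smem x (F i)}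

/-- Binary elementary union. -/
def eUnion2 (F G : SoftSet X A) : SoftSet X A := SS {x | smem x F ∨ smem x G}

/-- Binary elementary intersection. -/
def eInter2 (F G : SoftSet X A) : SoftSet X A := SS {x | smem x F ∧ smem x G}

/-- Elementary intersection of an indexed family of soft sets. -/
def eInterFam {ι : Type*} (F : ι → SoftSet X A) : SoftSet X A := SS {x | ∀ i, smem x (F i)}

/-- Elementary complement of a soft set. -/
def eCompl (F : SoftSet X A) : SoftSet X A := SS {x | ∀ α, x α ∉ F α}

/-- Relative (pointwise) complement of a soft set. -/
def relCompl (F : SoftSet X A) : SoftSet X A := fun α => (F α)ᶜ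

/-- Relative complement inside a subset `Y ⊆ X`. -/
def relComplIn (Y : Set X) (F : SoftSet X A) : SoftSet X A := fun α => Y \ F α

/-- Elementary complement relative to `Y ⊆ X`. -/
def eComplIn (Y : Set X) (F : SoftSet X A) : SoftSet X A :=
  SS {x | ∀ α, x α ∈ Y \ F α}

/-- A soft e-topology on the soft set `B`. -/
def IsETopologyOn (B : SoftSet X A) (τ : Set (SoftSet X A)) : Prop :=
  (∀ F ∈ τ, InS F ∧ softSubset F B) ∧
  nullSoft X A ∈ τ ∧ B ∈ τ ∧
  (∀ s ⊆ τ, eUnionSet s ∈ τ) ∧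
  (∀ F ∈ τ, ∀ G ∈ τ, eInter2 F G ∈ τ)

/-- A soft e-topology on the absolute soft set `(X̃, A)`. -/
def IsETopology (τ : Set (SoftSet X A)) : Prop := IsETopologyOn (absSoft X A) τ

/-- Soft e-closed set. -/
def IsEClosed (τ : Set (SoftSet X A)) (F : SoftSet X A) : Prop :=
  InS F ∧ InS (relCompl F) ∧ eCompl F ∈ τ

/-- Soft e-Hausdorff property relative to a base soft set `B`. -/
def IsEHausdorffOn (B : SoftSet X A) (τ : Set (SoftSet X A)) : Prop :=
  ∀ x y : A → X, smem x B → smem y B → (∀ α, x α ≠ y α) →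
    ∃ F ∈ τ, ∃ G ∈ τ, smem x F ∧ smem y G ∧ ∀ α, F α ∩ G α = ∅

/-- Soft e-Hausdorff space. -/
def IsEHausdorff (τ : Set (SoftSet X A)) : Prop := IsEHausdorffOn (absSoft X A) τ

/-- Soft e-quasi-compactness relative to a base soft set `B`. -/
def IsEQuasiCompactOn (B : SoftSet X A) (τ : Set (SoftSet X A)) : Prop :=
  ∀ s ⊆ τ, eUnionSet s = B → ∃ t ⊆ s, t.Finite ∧ eUnionSet t = B

/-- Soft e-quasi-compact space. -/
def IsEQuasiCompact (τ : Set (SoftSet X A)) : Prop :=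
  IsEQuasiCompactOn (absSoft X A) τ

/-- Soft e-compact set. -/
def IsECompactSet (τ : Set (SoftSet X A)) (K : SoftSet X A) : Prop :=
  InS K ∧ InS (relCompl K) ∧
  ∀ s ⊆ τ, softSubset K (eUnionSet s) →
    ∃ t ⊆ s, t.Finite ∧ softSubset K (eUnionSet t)

/-- The subspace soft e-topology `τ_Y`. -/
def subTop (τ : Set (SoftSet X A)) (Y : Set X) : Set (SoftSet X A) :=
  {G | ∃ O ∈ τ, G = fun α => O α ∩ Y}

/-- Soft neighborhood of a soft element. -/
def IsNbd (τ : Set (SoftSet X A)) (x : A → X) (N : SoftSet X A) : Prop :=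
  N ≠ nullSoft X A ∧ ∃ G ∈ τ, smem x G ∧ softSubset G N

/-- Soft interior of a soft set. -/
def sInt (τ : Set (SoftSet X A)) (F : SoftSet X A) : SoftSet X A :=
  SS {x | smem x F ∧ ∃ G ∈ τ, smem x G ∧ softSubset G F}

end SoftE

namespace SoftE

variable {X A : Type*}

theorem smem_SS_of_mem {B : Set (A → X)} {x : A → X} (hx : x ∈ B) : smem x (SS B) :=
  fun _ => ⟨x, hx, rfl⟩

theorem smem_update [DecidableEq A] {F : SoftSet X A} {x : A → X} (hx : smem x F) {α : A} {a : X}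
    (ha : a ∈ F α) : smem (Function.update x α a) F := by
  intro β
  by_cases hβ : β = α
  · subst hβ
    simpa using ha
  · simpa [Function.update_of_ne hβ] using hx β

theorem smem_eCompl_iff {F : SoftSet X A} {x : A → X} :
    smem x (eCompl F) ↔ ∀ α, x α ∉ F α := by
  refine ⟨fun hx α => ?_, fun hx => smem_SS_of_mem hx⟩
  obtain ⟨w, hw, hwx⟩ := hx α
  exact hwx ▸ hw α

theorem notMem_eCompl_of_mem {F : SoftSet X A} {α : A} {a : X} (ha : a ∈ F α) :
    a ∉ eCompl F α := by
  rintro ⟨w, hw, rfl⟩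
  exact hw α ha

theorem smem_eInter2 {G H : SoftSet X A} {x : A → X} (hG : smem x G) (hH : smem x H) :
    smem x (eInter2 G H) :=
  smem_SS_of_mem ⟨hG, hH⟩

theorem eInter2_subset_inter (G H : SoftSet X A) (α : A) :
    eInter2 G H α ⊆ G α ∩ H α := by
  rintro _ ⟨x, ⟨hG, hH⟩, rfl⟩
  exact ⟨hG α, hH α⟩

theorem exists_mem_of_mem_eUnionSet {s : Set (SoftSet X A)} {α : A} {a : X}
    (ha : a ∈ eUnionSet s α) : ∃ S ∈ s, a ∈ S α := by
  obtain ⟨x, ⟨S, hS, hx⟩, rfl⟩ := ha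
  exact ⟨S, hS, hx α⟩

theorem mem_eUnionSet_of_smem {s : Set (SoftSet X A)} {S : SoftSet X A} (hS : S ∈ s)
    {x : A → X} (hx : smem x S) (α : A) : x α ∈ eUnionSet s α :=
  ⟨x, ⟨S, hS, hx⟩, rfl⟩

def SeparatedFrom (τ : Set (SoftSet X A)) (y : A → X) (S : SoftSet X A) : Prop :=
  ∃ K ∈ τ, smem y K ∧ ∀ α, S α ∩ K α = ∅

theorem exists_open_separating_of_finite {B : SoftSet X A} {τ : Set (SoftSet X A)}
    (hτ : IsETopologyOn B τ) {y : A → X} (hyB : smem y B) {t : Set (SoftSet X A)}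
    (ht : t.Finite) (hsep : ∀ S ∈ t, SeparatedFrom τ y S) :
    ∃ H ∈ τ, smem y H ∧ ∀ S ∈ t, ∀ α, S α ∩ H α = ∅ := by
  obtain ⟨-, -, hBτ, -, hinter⟩ := hτ
  induction t, ht using Set.Finite.induction_on with
  | empty => exact ⟨B, hBτ, hyB, by simp⟩
  | @insert S t _ _ ih =>
    obtain ⟨K, hKτ, hyK, hSK⟩ := hsep S (Set.mem_insert S t)
    obtain ⟨H, hHτ, hyH, htH⟩ := ih fun S' hS' => hsep S' (Set.mem_insert_of_mem S hS')
    refine ⟨eInter2 K H, hinter K hKτ H hHτ, smem_eInter2 hyK hyH, ?_⟩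
    rintro S' (rfl | hS') α
    · exact Set.subset_eq_empty
        (Set.inter_subset_inter_right _ fun _ h => (eInter2_subset_inter K H α h).1) (hSK α)
    · exact Set.subset_eq_empty
        (Set.inter_subset_inter_right _ fun _ h => (eInter2_subset_inter K H α h).2) (htH S' hS' α)

theorem eInter2_eUnionSet_eq_nullSoft {t : Set (SoftSet X A)} {H : SoftSet X A}
    (htH : ∀ S ∈ t, ∀ α, S α ∩ H α = ∅) : eInter2 (eUnionSet t) H = nullSoft X A := by
  funext α
  refine Set.eq_empty_of_forall_notMem fun a ha => ?_
  obtain ⟨haG, haH⟩ := eInter2_subset_inter _ _ α ha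
  obtain ⟨S, hS, haS⟩ := exists_mem_of_mem_eUnionSet haG
  exact (htH S hS α).subset ⟨haS, haH⟩

theorem softSubset_eUnionSet_diff_eCompl {F : SoftSet X A} {t : Set (SoftSet X A)}
    (hF : softSubset F (eUnionSet t)) : softSubset F (eUnionSet (t \ {eCompl F})) := by
  intro α a ha
  obtain ⟨x, ⟨S, hSt, hxS⟩, rfl⟩ := hF α ha
  have hSF : S ≠ eCompl F := by
    rintro rfl
    exact notMem_eCompl_of_mem ha (hxS α)
  exact mem_eUnionSet_of_smem (s := t \ {eCompl F}) ⟨hSt, hSF⟩ hxS α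

/- A point of `F α` is completed to a soft element of `F` (possible since `F ∈ S(X̃)`), which
Hausdorffness separates from `y`; a point outside `F α` put in place of `y α` gives a soft element
of `eCompl F`. -/
theorem eUnionSet_insert_eCompl_separatedFrom {τ : Set (SoftSet X A)} (hH : IsEHausdorff τ)
    {F : SoftSet X A} (hFS : InS F) {y : A → X} (hy : ∀ α, y α ∉ F α) :
    eUnionSet (insert (eCompl F) {S | S ∈ τ ∧ SeparatedFrom τ y S}) = absSoft X A := by
  classical
  funext α
  refine Set.eq_univ_of_forall fun a => ?_
  by_cases haF : a ∈ F α
  · have hFne : ∀ β, (F β).Nonempty := fun β =>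
      Set.nonempty_iff_ne_empty.mpr (hFS.resolve_left (fun h => (h α).subset haF) β)
    choose c hc using hFne
    have hxF : smem (Function.update c α a) F := smem_update hc haF
    obtain ⟨G, hGτ, K, hKτ, hxG, hyK, hGK⟩ :=
      hH _ y (fun _ => Set.mem_univ _) (fun _ => Set.mem_univ _)
        fun β hxy => hy β (hxy ▸ hxF β)
    simpa using mem_eUnionSet_of_smem (s := insert (eCompl F) {S | S ∈ τ ∧ SeparatedFrom τ y S})
      (Set.mem_insert_of_mem _ ⟨hGτ, K, hKτ, hyK, hGK⟩) hxG α
  · have hz : smem (Function.update y α a) (eCompl F) :=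
      smem_eCompl_iff.mpr (smem_update (F := relCompl F) hy haF)
    simpa using mem_eUnionSet_of_smem (Set.mem_insert _ _) hz α

end SoftE

open SoftE

theorem stmt13_general {X A : Type*}
    (τ : Set (SoftSet X A)) (hτ : IsETopology τ)
    (hqc : IsEQuasiCompact τ) (hH : IsEHausdorff τ)
    (F : SoftSet X A) (hF : IsEClosed τ F)
    (y : A → X) (hy : ∀ α, y α ∉ F α) :
    ∃ G ∈ τ, ∃ H ∈ τ, softSubset F G ∧ smem y H ∧
      eInter2 G H = nullSoft X A := by
  obtain ⟨hFS, -, hFcτ⟩ := hF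
  obtain ⟨t, hts, htfin, htU⟩ := hqc _ (Set.insert_subset hFcτ fun _ hS => hS.1)
    (eUnionSet_insert_eCompl_separatedFrom hH hFS hy)
  have hsep : ∀ S ∈ t \ {eCompl F}, S ∈ τ ∧ SeparatedFrom τ y S := fun S ⟨hSt, hSF⟩ =>
    (hts hSt).resolve_left hSF
  obtain ⟨H, hHτ, hyH, htH⟩ := exists_open_separating_of_finite hτ (fun _ => Set.mem_univ _)
    htfin.sdiff fun S hS => (hsep S hS).2
  obtain ⟨-, -, -, hunion, -⟩ := hτ
  refine ⟨eUnionSet (t \ {eCompl F}), hunion _ fun S hS => (hsep S hS).1, H, hHτ, ?_, hyH,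
    eInter2_eUnionSet_eq_nullSoft htH⟩
  exact softSubset_eUnionSet_diff_eCompl fun α a _ => htU ▸ Set.mem_univ a

/-- a soft e-compact soft e-Hausdorff space (with pointwise
intersections of open sets in `S(X̃)`) is soft e-regular. -/
theorem stmt13 {X A : Type*}
    (τ : Set (SoftSet X A)) (hτ : IsETopology τ)
    (hqc : IsEQuasiCompact τ) (hH : IsEHausdorff τ)
    (hint : ∀ O₁ ∈ τ, ∀ O₂ ∈ τ, InS (fun α => O₁ α ∩ O₂ α))
    (F : SoftSet X A) (hF : IsEClosed τ F)
    (y : A → X) (hy : ∀ α, y α ∉ F α) :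
    ∃ G ∈ τ, ∃ H ∈ τ, softSubset F G ∧ smem y H ∧
      eInter2 G H = nullSoft X A :=
  stmt13_general τ hτ hqc hH F hF y hy
end

section
/- Let (X̃, τ, A) be a soft e-compact soft e-Hausdorff space such that pointwise intersections of members of τ lie in S(X̃). Then (X̃, τ, A) is soft e-normal: for any two soft e-closed sets F₁, F₂ with F₁(α) ∩ F₂(α) = ∅ for all α ∈ A, there exist G₁, G₂ ∈ τ with F₁ ⊆̃ G₁, F₂ ⊆̃ G₂, and the elementary intersection G₁ ⋒ G₂ equal to the null soft set. -/
/-!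
Compact Hausdorff implies normal, by the classical two-step argument. If every soft element of
an e-closed set `F` can be separated by open sets from a soft set `K`, then finitely many of the
separating neighbourhoods, together with the open complement `eCompl F`, cover the space; the
union of those neighbourhoods and the pointwise intersection of the corresponding open sets
around `K` separate `K` from `F`. Applied first with `K` a soft point and then with `K` a closed
set, this turns e-Hausdorff separation into e-regularity and then into e-normality.
-/

namespace SoftE

variable {X A : Type*}

def softPoint (x : A → X) : SoftSet X A := fun α => {x α}

def Separated (τ : Set (SoftSet X A)) (K L : SoftSet X A) : Prop :=
  ∃ U ∈ τ, ∃ V ∈ τ, softSubset K U ∧ softSubset L V ∧ ∀ α, U α ∩ V α = ∅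

theorem Separated.symm {τ : Set (SoftSet X A)} {K L : SoftSet X A} (h : Separated τ K L) :
    Separated τ L K := by
  obtain ⟨U, hU, V, hV, hKU, hLV, hUV⟩ := h
  exact ⟨V, hV, U, hU, hLV, hKU, fun α => by rw [Set.inter_comm, hUV]⟩

theorem softSubset_softPoint_iff {x : A → X} {F : SoftSet X A} :
    softSubset (softPoint x) F ↔ smem x F := by
  simp only [softSubset, softPoint, smem, Set.singleton_subset_iff]

/-- `InS F` makes `F` nonempty at every parameter once it is nonempty at `α`. -/
theorem InS.exists_smem {F : SoftSet X A} (hF : InS F) {α : A} {a : X} (ha : a ∈ F α) :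
    ∃ x, smem x F ∧ x α = a := by
  classical
  have hne : ∀ β, (F β).Nonempty := by
    rcases hF with hF | hF
    · exact absurd (hF α ▸ ha) (Set.notMem_empty a)
    · exact fun β => Set.nonempty_iff_ne_empty.2 (hF β)
  refine ⟨Function.update (fun β => (hne β).some) α a, fun β => ?_, by simp⟩
  rcases eq_or_ne β α with rfl | hβ
  · simpa using ha
  · simpa [Function.update_of_ne hβ] using (hne β).some_mem

theorem eInter2_eq_inter {F G : SoftSet X A} (h : InS fun α => F α ∩ G α) :
    eInter2 F G = fun α => F α ∩ G α := by
  funext α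
  ext a
  constructor
  · rintro ⟨x, ⟨hxF, hxG⟩, rfl⟩
    exact ⟨hxF α, hxG α⟩
  · intro ha
    obtain ⟨x, hx, rfl⟩ := h.exists_smem ha
    exact ⟨x, ⟨fun β => (hx β).1, fun β => (hx β).2⟩, rfl⟩

theorem eInter2_eq_nullSoft {F G : SoftSet X A} (h : ∀ α, F α ∩ G α = ∅) :
    eInter2 F G = nullSoft X A := by
  funext α
  refine Set.eq_empty_of_forall_notMem ?_
  rintro _ ⟨x, ⟨hxF, hxG⟩, rfl⟩
  exact (h α ▸ ⟨hxF α, hxG α⟩ : x α ∈ (∅ : Set X))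

section Topology

variable {τ : Set (SoftSet X A)}

theorem IsETopology.biInter_mem (hτ : IsETopology τ)
    (hint : ∀ O₁ ∈ τ, ∀ O₂ ∈ τ, InS fun α => O₁ α ∩ O₂ α)
    {ι : Type*} (I : Finset ι) {U : ι → SoftSet X A} (hU : ∀ i ∈ I, U i ∈ τ) :
    (fun α => ⋂ i ∈ I, U i α) ∈ τ := by
  classical
  induction I using Finset.induction_on with
  | empty =>
    convert hτ.2.2.1 using 1
    funext α
    simp [absSoft]
  | insert j I _ ih =>
    have hI : (fun α => ⋂ i ∈ I, U i α) ∈ τ :=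
      ih fun i hi => hU i (Finset.mem_insert_of_mem hi)
    have hj : U j ∈ τ := hU j (Finset.mem_insert_self j I)
    simp only [Finset.set_biInter_insert]
    rw [← eInter2_eq_inter (hint _ hj _ hI)]
    exact hτ.2.2.2.2 _ hj _ hI

theorem IsEQuasiCompact.exists_finset (hqc : IsEQuasiCompact τ) {ι : Type*}
    {V : ι → SoftSet X A} (hV : ∀ i, V i ∈ τ)
    (hcov : eUnionSet (Set.range V) = absSoft X A) :
    ∃ I : Finset ι, eUnionSet (V '' I) = absSoft X A := by
  obtain ⟨t, hVt, htfin, htcov⟩ := hqc (Set.range V) (Set.range_subset_iff.2 hV) hcov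
  rw [← Set.image_univ] at hVt
  obtain ⟨I, -, hIfin, hIcov⟩ :=
    (Set.exists_subset_image_finite_and (p := fun t => eUnionSet t = absSoft X A)).1
      ⟨t, hVt, htfin, htcov⟩
  exact ⟨hIfin.toFinset, by rwa [Set.Finite.coe_toFinset]⟩

theorem IsEClosed.exists_smem_eCompl {F : SoftSet X A} (hF : IsEClosed τ F) {α : A} {a : X}
    (ha : a ∉ F α) : ∃ x, smem x (eCompl F) ∧ x α = a := by
  obtain ⟨x, hx, rfl⟩ := hF.2.1.exists_smem (F := relCompl F) ha
  exact ⟨x, fun β => ⟨x, hx, rfl⟩, rfl⟩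

theorem separated_of_forall_smem (hτ : IsETopology τ) (hqc : IsEQuasiCompact τ)
    (hint : ∀ O₁ ∈ τ, ∀ O₂ ∈ τ, InS fun α => O₁ α ∩ O₂ α) {K F : SoftSet X A}
    (hF : IsEClosed τ F) (hsep : ∀ y, smem y F → Separated τ K (softPoint y)) :
    Separated τ K F := by
  classical
  choose U hU V hV hKU hyV hUV using fun y : {y // smem y F} => hsep y y.2
  let V' : Option {y // smem y F} → SoftSet X A := fun i => i.elim (eCompl F) V
  have hV' : ∀ i, V' i ∈ τ := fun i => i.rec hF.2.2 hV
  have hcov : eUnionSet (Set.range V') = absSoft X A := by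
    funext α
    refine Set.eq_univ_of_forall fun a => ?_
    by_cases ha : a ∈ F α
    · obtain ⟨y, hy, rfl⟩ := hF.1.exists_smem ha
      have hyV' : smem y (V ⟨y, hy⟩) := softSubset_softPoint_iff.1 (hyV ⟨y, hy⟩)
      exact ⟨y, ⟨_, ⟨some ⟨y, hy⟩, rfl⟩, hyV'⟩, rfl⟩
    · obtain ⟨x, hx, rfl⟩ := hF.exists_smem_eCompl ha
      exact ⟨x, ⟨_, ⟨none, rfl⟩, hx⟩, rfl⟩
  obtain ⟨I, hIcov⟩ := hqc.exists_finset hV' hcov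
  refine ⟨fun α => ⋂ i ∈ I.eraseNone, U i α, hτ.biInter_mem hint _ fun i _ => hU i,
    eUnionSet (V '' I.eraseNone), hτ.2.2.2.1 _ (by rintro _ ⟨i, -, rfl⟩; exact hV i),
    fun α a ha => Set.mem_biInter fun i _ => hKU i α ha, ?_, ?_⟩
  · intro α a ha
    have hcov_a : a ∈ eUnionSet (V' '' I) α := by rw [hIcov]; trivial
    obtain ⟨x, ⟨_, ⟨i, hi, rfl⟩, hxi⟩, rfl⟩ := hcov_a
    cases i with
    | none =>
      obtain ⟨w, hw, hwx⟩ := hxi α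
      exact absurd (hwx ▸ ha) (hw α)
    | some i => exact ⟨x, ⟨_, ⟨i, Finset.mem_eraseNone.2 hi, rfl⟩, hxi⟩, rfl⟩
  · intro α
    refine Set.eq_empty_of_forall_notMem ?_
    rintro _ ⟨haU, x, ⟨_, ⟨i, hi, rfl⟩, hxi⟩, rfl⟩
    have hxU : x α ∈ U i α := Set.mem_iInter₂.1 haU i hi
    exact (hUV i α ▸ ⟨hxU, hxi α⟩ : x α ∈ (∅ : Set X))

end Topology

end SoftE

open SoftE

/-- a soft e-compact soft e-Hausdorff space (with pointwise
intersections of open sets in `S(X̃)`) is soft e-normal. -/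
theorem stmt14 {X A : Type*}
    (τ : Set (SoftSet X A)) (hτ : IsETopology τ)
    (hqc : IsEQuasiCompact τ) (hH : IsEHausdorff τ)
    (hint : ∀ O₁ ∈ τ, ∀ O₂ ∈ τ, InS (fun α => O₁ α ∩ O₂ α))
    (F₁ F₂ : SoftSet X A)
    (hF₁ : IsEClosed τ F₁) (hF₂ : IsEClosed τ F₂)
    (hdisj : ∀ α, F₁ α ∩ F₂ α = ∅) :
    ∃ G₁ ∈ τ, ∃ G₂ ∈ τ, softSubset F₁ G₁ ∧ softSubset F₂ G₂ ∧
      eInter2 G₁ G₂ = nullSoft X A := by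
  have hpoints :
      ∀ x, smem x F₁ → ∀ y, smem y F₂ → Separated τ (softPoint x) (softPoint y) := by
    intro x hx y hy
    have hxy : ∀ α, x α ≠ y α := fun α h =>
      (hdisj α ▸ ⟨hx α, h ▸ hy α⟩ : x α ∈ (∅ : Set X))
    obtain ⟨U, hU, V, hV, hxU, hyV, hUV⟩ := hH x y (fun _ => trivial) (fun _ => trivial) hxy
    exact ⟨U, hU, V, hV, softSubset_softPoint_iff.2 hxU, softSubset_softPoint_iff.2 hyV, hUV⟩
  have hregular : ∀ x, smem x F₁ → Separated τ F₂ (softPoint x) := fun x hx =>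
    (separated_of_forall_smem hτ hqc hint hF₂ (hpoints x hx)).symm
  obtain ⟨G₂, hG₂, G₁, hG₁, hFG₂, hFG₁, hG⟩ :=
    separated_of_forall_smem hτ hqc hint hF₁ hregular
  refine ⟨G₁, hG₁, G₂, hG₂, hFG₁, hFG₂, eInter2_eq_nullSoft fun α => ?_⟩
  rw [Set.inter_comm, hG]
end
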